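/- If Π̄⁻(0+) > 0, then limsup_{x↓0} A(x)/√(Π̄⁻(x)) < ∞. If Π̄⁻(0+) = 0 and Π̄⁺(0+) > 0, then limsup_{x↓0} A(x)/√(Π̄⁺(x)) < ∞. -/

import Mathlib

open MeasureTheory ProbabilityTheory Filter Set Topology

noncomputable section

namespace LevyPaper

/-- The jump of a real path at time `s`. -/
def jumpAt (f : ℝ → ℝ) (s : ℝ) : ℝ := f s - Function.leftLim f s

/-- Positive tail `Π̄⁺(x) = Π((x,∞))` of a Lévy measure. -/
def tailP (P : Measure ℝ) (x : ℝ) : ℝ := (P (Set.Ioi x)).toReal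

/-- Negative tail `Π̄⁻(x) = Π((−∞,−x))` of a Lévy measure. -/
def tailM (P : Measure ℝ) (x : ℝ) : ℝ := (P (Set.Iio (-x))).toReal

/-- Two-sided tail `Π̄ = Π̄⁺ + Π̄⁻`. -/
def tail (P : Measure ℝ) (x : ℝ) : ℝ := tailP P x + tailM P x

/-- Right-continuous inverse `g^←(x) = inf{y > 0 : g(y) ≤ x}` of a nonincreasing function. -/
def rInv (g : ℝ → ℝ) (x : ℝ) : ℝ := sInf {y : ℝ | 0 < y ∧ g y ≤ x}

/-- `Π` is a Lévy measure on `ℝ∖{0}`: no mass at `0` and `∫ (x² ∧ 1) Π(dx) < ∞`. -/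
def IsLevyMeasure (P : Measure ℝ) : Prop :=
  P {0} = 0 ∧ ∫⁻ x, ENNReal.ofReal (min (x ^ 2) 1) ∂P < ⊤

/-- The Lévy–Khintchine characteristic exponent of the triplet `(γ, σ², Π)`. -/
def charExponent (γ σ2 : ℝ) (P : Measure ℝ) (θ : ℝ) : ℂ :=
  Complex.I * θ * γ - σ2 * θ ^ 2 / 2 +
    ∫ x : ℝ, (Complex.exp (Complex.I * θ * x) - 1 -
      (if |x| ≤ 1 then Complex.I * θ * x else 0)) ∂P

variable {Ω : Type} [MeasureSpace Ω]

/-- `X` is a Lévy process with canonical triplet `(γ, σ², Π)` (paths extended by `0` to `t ≤ 0`):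
càdlàg paths, stationary independent increments, and characteristic function
`E e^{iθX_t} = e^{tΨ(θ)}`. -/
structure IsLevy (X : ℝ → Ω → ℝ) (γ σ2 : ℝ) (P : Measure ℝ) : Prop where
  isProb : IsProbabilityMeasure (ℙ : Measure Ω)
  levyMeasure : IsLevyMeasure P
  sigma_nonneg : 0 ≤ σ2
  meas : ∀ t, Measurable (X t)
  init : ∀ᵐ ω : Ω, ∀ t ≤ (0 : ℝ), X t ω = 0
  cadlag : ∀ᵐ ω : Ω, ∀ t : ℝ, ContinuousWithinAt (fun s => X s ω) (Set.Ici t) t ∧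
      ∃ l : ℝ, Tendsto (fun s => X s ω) (𝓝[<] t) (𝓝 l)
  indepIncrements : ∀ (n : ℕ) (t : Fin (n + 1) → ℝ), Monotone t →
      iIndepFun
        (fun i : Fin n => fun ω => X (t i.succ) ω - X (t i.castSucc) ω) ℙ
  statIncrements : ∀ s t : ℝ, 0 ≤ s → s ≤ t →
      IdentDistrib (fun ω => X t ω - X s ω) (X (t - s)) ℙ ℙ
  charFun : ∀ t : ℝ, 0 ≤ t → ∀ θ : ℝ,
      ∫ ω, Complex.exp (Complex.I * θ * X t ω) ∂ℙ = Complex.exp (t * charExponent γ σ2 P θ)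

/-- Sum of `g` of the jumps of `X` over `(0, t]`. -/
def jumpSum (X : ℝ → Ω → ℝ) (g : ℝ → ℝ) (t : ℝ) (ω : Ω) : ℝ :=
  ∑' s : Set.Ioc (0 : ℝ) t, g (jumpAt (fun u => X u ω) s)

/-- The quadratic variation `V_t = σ²t + ∑_{0<s≤t} (ΔX_s)²`. -/
def quadVar (X : ℝ → Ω → ℝ) (σ2 t : ℝ) (ω : Ω) : ℝ :=
  σ2 * t + jumpSum X (fun x => x ^ 2) t ω

/-- `sup_{0<s≤t} |ΔX_s|`. -/
def supAbsJump (X : ℝ → Ω → ℝ) (t : ℝ) (ω : Ω) : ℝ :=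
  sSup ((fun s => |jumpAt (fun u => X u ω) s|) '' Set.Ioc 0 t)

/-- `sup_{0<s≤t} ΔX_s⁺`. -/
def supPosJump (X : ℝ → Ω → ℝ) (t : ℝ) (ω : Ω) : ℝ :=
  sSup ((fun s => max (jumpAt (fun u => X u ω) s) 0) '' Set.Ioc 0 t)

/-- `sup_{0<s≤t} ΔX_s⁻`. -/
def supNegJump (X : ℝ → Ω → ℝ) (t : ℝ) (ω : Ω) : ℝ :=
  sSup ((fun s => max (-(jumpAt (fun u => X u ω) s)) 0) '' Set.Ioc 0 t)

/-- `sup_{0<s≤t} ΔX_s`. -/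
def supJump (X : ℝ → Ω → ℝ) (t : ℝ) (ω : Ω) : ℝ :=
  sSup ((fun s => jumpAt (fun u => X u ω) s) '' Set.Ioc 0 t)

/-- Winsorised first moment function
`A(x) = γ + Π̄⁺(1) − Π̄⁻(1) − ∫_x^1 (Π̄⁺(y) − Π̄⁻(y)) dy`. -/
def Afun (γ : ℝ) (P : Measure ℝ) (x : ℝ) : ℝ :=
  γ + tailP P 1 - tailM P 1 - ∫ y in x..1, (tailP P y - tailM P y)

/-- Winsorised second moment function `U(x) = σ² + 2∫_0^x y Π̄(y) dy`. -/
def Ufun (σ2 : ℝ) (P : Measure ℝ) (x : ℝ) : ℝ :=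
  σ2 + 2 * ∫ y in (0 : ℝ)..x, y * tail P y

/-- `X` is of bounded variation: `σ² = 0` and `∫_{|x|≤1} |x| Π(dx) < ∞`. -/
def BoundedVariation (σ2 : ℝ) (P : Measure ℝ) : Prop :=
  σ2 = 0 ∧ ∫⁻ x, ENNReal.ofReal (min |x| 1) ∂P < ⊤

/-- The drift `d_X = γ − ∫_{|x|≤1} x Π(dx)` of a bounded variation Lévy process. -/
def drift (γ : ℝ) (P : Measure ℝ) : ℝ := γ - ∫ x in {y : ℝ | |y| ≤ 1}, x ∂P

/-- `f` is slowly varying at `0`: `f(ux)/f(x) → 1` as `x ↓ 0`, for every `u > 0`. -/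
def SlowlyVaryingAt0 (f : ℝ → ℝ) : Prop :=
  ∀ u : ℝ, 0 < u → Tendsto (fun x => f (u * x) / f x) (𝓝[>] (0 : ℝ)) (𝓝 1)

/-- `T` enumerates, for each `t > 0`, the jump times of `X` in `(0,t]` in nonincreasing
order of jump modulus (covering all nonzero jumps); `T 0` carries the jump of largest
modulus, `T 1` the second largest, and so on. -/
def IsModOrderedJumpTimes (X : ℝ → Ω → ℝ) (T : ℕ → ℝ → Ω → ℝ) : Prop :=
  (∀ i t, Measurable (T i t)) ∧
  ∀ᵐ ω : Ω, ∀ t : ℝ, 0 < t →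
    Function.Injective (fun i => T i t ω) ∧
    (∀ i, T i t ω ∈ Set.Ioc 0 t) ∧
    (Antitone fun i => |jumpAt (fun u => X u ω) (T i t ω)|) ∧
    (∀ s ∈ Set.Ioc (0 : ℝ) t, jumpAt (fun u => X u ω) s ≠ 0 → ∃ i, T i t ω = s)

/-- `T` enumerates, for each `t > 0`, the positive jumps of `X` in `(0,t]` in nonincreasing
order (covering all positive jumps). -/
def IsPosOrderedJumpTimes (X : ℝ → Ω → ℝ) (T : ℕ → ℝ → Ω → ℝ) : Prop :=
  (∀ i t, Measurable (T i t)) ∧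
  ∀ᵐ ω : Ω, ∀ t : ℝ, 0 < t →
    Function.Injective (fun i => T i t ω) ∧
    (∀ i, T i t ω ∈ Set.Ioc 0 t) ∧
    (∀ i, 0 ≤ jumpAt (fun u => X u ω) (T i t ω)) ∧
    (Antitone fun i => jumpAt (fun u => X u ω) (T i t ω)) ∧
    (∀ s ∈ Set.Ioc (0 : ℝ) t, 0 < jumpAt (fun u => X u ω) s → ∃ i, T i t ω = s)

/-- The jump associated with the `(r+1)`-st order statistic (so `ordJump X T 0` is the
largest). -/
def ordJump (X : ℝ → Ω → ℝ) (T : ℕ → ℝ → Ω → ℝ) (r : ℕ) (t : ℝ) (ω : Ω) : ℝ :=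
  jumpAt (fun u => X u ω) (T r t ω)

/-- `Y` is a unit-rate Poisson process. -/
def IsPoissonProcess (Y : ℝ → Ω → ℕ) : Prop :=
  (∀ t, Measurable (Y t)) ∧
  (∀ᵐ ω : Ω, Y 0 ω = 0 ∧ ∀ s t : ℝ, 0 ≤ s → s ≤ t → Y s ω ≤ Y t ω) ∧
  (∀ (n : ℕ) (t : Fin (n + 1) → ℝ), (∀ i, 0 ≤ t i) → Monotone t →
      iIndepFun
        (fun i : Fin n => fun ω => Y (t i.succ) ω - Y (t i.castSucc) ω) ℙ) ∧
  (∀ s t : ℝ, 0 ≤ s → s ≤ t →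
      Measure.map (fun ω => Y t ω - Y s ω) ℙ = (poissonPMF (t - s).toNNReal).toMeasure)

/-- `Π({y})`, as a real number. -/
def atom (P : Measure ℝ) (y : ℝ) : ℝ := (P {y}).toReal

/-- The left limit `Π̄(y−) = Π([y,∞)) + Π((−∞,−y])` of the two-sided tail. -/
def tailLeft (P : Measure ℝ) (y : ℝ) : ℝ := (P (Set.Ici y)).toReal + (P (Set.Iic (-y))).toReal

/-- `ΔΠ̄(y) = Π̄(y−) − Π̄(y) = Π({y}) + Π({−y})`. -/
def atomTail (P : Measure ℝ) (y : ℝ) : ℝ := atom P y + atom P (-y)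

/-- `κ⁺(v)` of the paper. -/
def kappaP (P : Measure ℝ) (v : ℝ) : ℝ :=
  if atomTail P (rInv (tail P) v) ≠ 0 then
    (tailLeft P (rInv (tail P) v) - v) * atom P (rInv (tail P) v) / atomTail P (rInv (tail P) v)
  else 0

/-- `κ⁻(v)` of the paper. -/
def kappaM (P : Measure ℝ) (v : ℝ) : ℝ :=
  if atomTail P (rInv (tail P) v) ≠ 0 then
    (tailLeft P (rInv (tail P) v) - v) * atom P (-(rInv (tail P) v)) / atomTail P (rInv (tail P) v)
  else 0

/-- `κ(v) = Π̄⁺(Π̄^{+,←}(v)−) − v` of the paper. -/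
def kappaPos (P : Measure ℝ) (v : ℝ) : ℝ := (P (Set.Ici (rInv (tailP P) v))).toReal - v

/-- The process `X̃ᵛ`: `X` with all jumps of modulus `≥ Π̄^←(v)` removed. -/
def truncModX (X : ℝ → Ω → ℝ) (P : Measure ℝ) (v t : ℝ) (ω : Ω) : ℝ :=
  X t ω - jumpSum X (fun x => if rInv (tail P) v ≤ |x| then x else 0) t ω

/-- The process `Ṽᵛ`: `V` with all squared jumps of modulus `≥ Π̄^←(v)` removed. -/
def truncModV (X : ℝ → Ω → ℝ) (σ2 : ℝ) (P : Measure ℝ) (v t : ℝ) (ω : Ω) : ℝ :=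
  quadVar X σ2 t ω - jumpSum X (fun x => if rInv (tail P) v ≤ |x| then x ^ 2 else 0) t ω

/-- The process `Xᵛ`: `X` with all jumps `≥ Π̄^{+,←}(v)` removed. -/
def truncPosX (X : ℝ → Ω → ℝ) (P : Measure ℝ) (v t : ℝ) (ω : Ω) : ℝ :=
  X t ω - jumpSum X (fun x => if rInv (tailP P) v ≤ x then x else 0) t ω

/-- The process `Vᵛ`: `V` with all squared jumps `≥ Π̄^{+,←}(v)` removed. -/
def truncPosV (X : ℝ → Ω → ℝ) (σ2 : ℝ) (P : Measure ℝ) (v t : ℝ) (ω : Ω) : ℝ :=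
  quadVar X σ2 t ω - jumpSum X (fun x => if rInv (tailP P) v ≤ x then x ^ 2 else 0) t ω

/-- Convergence in probability to a constant, as `t ↓ 0`. -/
def TendstoInProbAt0 (Z : ℝ → Ω → ℝ) (c : ℝ) : Prop :=
  ∀ ε : ℝ, 0 < ε →
    Tendsto (fun t => (ℙ : Measure Ω) {ω | ε < |Z t ω - c|}) (𝓝[>] (0 : ℝ)) (𝓝 0)

/-- Convergence in probability to a constant, along a sequence. -/
def TendstoInProbSeq (Z : ℕ → Ω → ℝ) (c : ℝ) : Prop :=
  ∀ ε : ℝ, 0 < ε →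
    Tendsto (fun k => (ℙ : Measure Ω) {ω | ε < |Z k ω - c|}) atTop (𝓝 0)

/-- `N_t / D_t → c` in probability as `t ↓ 0` (stated in multiplied form, for a.s. positive
denominators). -/
def RatioToConstInProbAt0 (N D : ℝ → Ω → ℝ) (c : ℝ) : Prop :=
  ∀ ε : ℝ, 0 < ε →
    Tendsto (fun t => (ℙ : Measure Ω) {ω | ε * |D t ω| < |N t ω - c * D t ω|})
      (𝓝[>] (0 : ℝ)) (𝓝 0)

/-- `N_t / D_t → ∞` in probability as `t ↓ 0` (stated in multiplied form, for a.s. positive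
denominators). -/
def RatioToTopInProbAt0 (N D : ℝ → Ω → ℝ) : Prop :=
  ∀ M : ℝ, Tendsto (fun t => (ℙ : Measure Ω) {ω | N t ω ≤ M * D t ω}) (𝓝[>] (0 : ℝ)) (𝓝 0)

/-- `N_{t_k} / D_{t_k} → ∞` in probability as `k → ∞`. -/
def RatioToTopInProbSeq (N D : ℝ → Ω → ℝ) (tk : ℕ → ℝ) : Prop :=
  ∀ M : ℝ, Tendsto (fun k => (ℙ : Measure Ω) {ω | N (tk k) ω ≤ M * D (tk k) ω}) atTop (𝓝 0)

/-- Convergence in distribution to the standard normal law, along a filter on the time axis. -/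
def ConvToStdNormal (Z : ℝ → Ω → ℝ) (l : Filter ℝ) : Prop :=
  ∀ f : BoundedContinuousFunction ℝ ℝ,
    Tendsto (fun t => ∫ ω, f (Z t ω) ∂(ℙ : Measure Ω)) l (𝓝 (∫ x, f x ∂gaussianReal 0 1))

/-- Convergence in distribution to the standard normal law, along a sequence. -/
def ConvToStdNormalSeq (Z : ℕ → Ω → ℝ) : Prop :=
  ∀ f : BoundedContinuousFunction ℝ ℝ,
    Tendsto (fun k => ∫ ω, f (Z k ω) ∂(ℙ : Measure Ω)) atTop (𝓝 (∫ x, f x ∂gaussianReal 0 1))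

/-- `X` is positively relatively stable at `0`. -/
def PRSAt0 (X : ℝ → Ω → ℝ) : Prop :=
  ∃ b : ℝ → ℝ, (∀ t : ℝ, 0 < t → 0 < b t) ∧
    TendstoInProbAt0 (fun t ω => X t ω / b t) 1

/-- `X` is relatively stable at `0`. -/
def RSAt0 (X : ℝ → Ω → ℝ) : Prop :=
  ∃ b : ℝ → ℝ, (∀ t : ℝ, 0 < t → 0 < b t) ∧
    (TendstoInProbAt0 (fun t ω => X t ω / b t) 1 ∨
      TendstoInProbAt0 (fun t ω => X t ω / b t) (-1))

/-- `X` is positively subsequentially relatively stable at `0`. -/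
def PSRSAt0 (X : ℝ → Ω → ℝ) : Prop :=
  ∃ tk bk : ℕ → ℝ, (∀ k, 0 < tk k) ∧ Tendsto tk atTop (𝓝 0) ∧ (∀ k, 0 < bk k) ∧
    TendstoInProbSeq (fun k ω => X (tk k) ω / bk k) 1

/-- `X` is subsequentially relatively stable at `0`. -/
def SRSAt0 (X : ℝ → Ω → ℝ) : Prop :=
  ∃ tk bk : ℕ → ℝ, (∀ k, 0 < tk k) ∧ Tendsto tk atTop (𝓝 0) ∧ (∀ k, 0 < bk k) ∧
    (TendstoInProbSeq (fun k ω => X (tk k) ω / bk k) 1 ∨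
      TendstoInProbSeq (fun k ω => X (tk k) ω / bk k) (-1))

/-- `X ∈ D(N)` at `0`: attraction to normality with general centering. -/
def DomNormalAt0 (X : ℝ → Ω → ℝ) : Prop :=
  ∃ a b : ℝ → ℝ, (∀ t : ℝ, 0 < t → 0 < b t) ∧
    ConvToStdNormal (fun t ω => (X t ω - a t) / b t) (𝓝[>] (0 : ℝ))

/-- `X ∈ D₀(N)` at `0`: attraction to normality without centering. -/
def Dom0NormalAt0 (X : ℝ → Ω → ℝ) : Prop :=
  ∃ b : ℝ → ℝ, (∀ t : ℝ, 0 < t → 0 < b t) ∧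
    ConvToStdNormal (fun t ω => X t ω / b t) (𝓝[>] (0 : ℝ))

/-- `X ∈ D_{P0}(N)` at `0`: subsequential attraction to normality without centering, with
norming sequence tending to `0`. -/
def DomP0NormalAt0 (X : ℝ → Ω → ℝ) : Prop :=
  ∃ tk bk : ℕ → ℝ, (∀ k, 0 < tk k) ∧ Tendsto tk atTop (𝓝 0) ∧
    (∀ k, 0 < bk k) ∧ Tendsto bk atTop (𝓝 0) ∧
    ConvToStdNormalSeq (fun k ω => X (tk k) ω / bk k)

/-- `X` is a subordinator: a.s. nondecreasing paths. -/
def IsSubordinator (X : ℝ → Ω → ℝ) : Prop :=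
  ∀ᵐ ω : Ω, MonotoneOn (fun s => X s ω) (Set.Ici (0 : ℝ))

/-- `limsup_{x↓0} f(x) = ∞`. -/
def LimsupTopAt0 (f : ℝ → ℝ) : Prop := ∀ C : ℝ, ∃ᶠ x in 𝓝[>] (0 : ℝ), C < f x

/-- `limsup_{x↓0} f(x) < ∞`. -/
def LimsupBddAt0 (f : ℝ → ℝ) : Prop := ∃ C : ℝ, ∀ᶠ x in 𝓝[>] (0 : ℝ), f x ≤ C

end LevyPaper

open LevyPaper

/-!
Fix `x₁ ∈ (0, 1]` with positive tail. Since `A' = Π̄⁺ − Π̄⁻` and `Π̄⁺ ≥ 0`,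
`A(x) ≤ A(x₁) + ∫_x^{x₁} Π̄⁻` for `x ≤ x₁`. The Lévy condition gives `y² Π̄⁻(y) ≤ C`, with
`C = ∫ (u² ∧ 1) dΠ`, so on `[x, x₁]` the integrand is at most `min (Π̄⁻(x)) (C / y²)`, whose
integral is at most `2 √C √Π̄⁻(x)`. If `Π̄⁻` vanishes identically, the integral term is `0`
and `A(x) ≤ A(x₁)`, while `√Π̄⁺(x) ≥ √Π̄⁺(x₁) > 0`.
-/

theorem integral_le_div_sub_div_of_sq_mul_le {f : ℝ → ℝ} {C a b : ℝ} (ha : 0 < a)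
    (hab : a ≤ b) (hf : IntervalIntegrable f volume a b) (h_sq : ∀ y ∈ Icc a b, y ^ 2 * f y ≤ C) :
    ∫ y in a..b, f y ≤ C / a - C / b := by
  have hpos : ∀ y ∈ uIcc a b, 0 < y := fun y hy => ha.trans_le (uIcc_of_le hab ▸ hy).1
  have hderiv : ∀ y ∈ uIcc a b, HasDerivAt (fun y => -C * y⁻¹) (C / y ^ 2) y := fun y hy =>
    ((hasDerivAt_inv (hpos y hy).ne').const_mul (-C)).congr_deriv (by ring)
  have hcont : ContinuousOn (fun y => C / y ^ 2) (uIcc a b) :=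
    continuousOn_const.div (continuousOn_pow 2) fun y hy => (pow_pos (hpos y hy) 2).ne'
  calc ∫ y in a..b, f y ≤ ∫ y in a..b, C / y ^ 2 :=
        intervalIntegral.integral_mono_on hab hf hcont.intervalIntegrable fun y hy =>
          (le_div_iff₀' (pow_pos (hpos y (Icc_subset_uIcc hy)) 2)).2 (h_sq y hy)
    _ = C / a - C / b := by
        rw [intervalIntegral.integral_eq_sub_of_hasDerivAt hderiv hcont.intervalIntegrable]; ring

theorem integral_le_two_sqrt_mul_sqrt_of_sq_mul_le {f : ℝ → ℝ} {x b C : ℝ} (hx : 0 < x)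
    (hxb : x ≤ b) (hf : IntervalIntegrable f volume x b) (hfx : 0 < f x)
    (h_le : ∀ y ∈ Icc x b, f y ≤ f x) (h_sq : ∀ y ∈ Icc x b, y ^ 2 * f y ≤ C) :
    ∫ y in x..b, f y ≤ 2 * √C * √(f x) := by
  set t := f x
  have hC : 0 < C := (by positivity : 0 < x ^ 2 * t).trans_le (h_sq x ⟨le_rfl, hxb⟩)
  -- Split at `s = √(C / t)`, where the two bounds `f ≤ t` and `f ≤ C / y²` cross.
  set s := √(C / t) with hs_def
  have hxs : x ≤ s := Real.le_sqrt_of_sq_le ((le_div_iff₀ hfx).2 (h_sq x ⟨le_rfl, hxb⟩))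
  rw [Real.sqrt_div hC.le] at hs_def
  have hst : s * t = √C * √t := by
    rw [hs_def]; field_simp; rw [Real.sq_sqrt hfx.le]
  have hCs : C / s = √C * √t := by
    rw [hs_def]; field_simp; rw [Real.sq_sqrt hC.le]
  set m := min b s
  have hxm : x ≤ m := le_min hxb hxs
  have hmb : m ≤ b := min_le_left b s
  have hm : m ∈ uIcc x b := mem_uIcc_of_le hxm hmb
  have hf₁ : IntervalIntegrable f volume x m := hf.mono_set (uIcc_subset_uIcc left_mem_uIcc hm)
  have hf₂ : IntervalIntegrable f volume m b := hf.mono_set (uIcc_subset_uIcc hm right_mem_uIcc)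
  have hfirst : ∫ y in x..m, f y ≤ √C * √t :=
    calc ∫ y in x..m, f y ≤ ∫ _ in x..m, t :=
          intervalIntegral.integral_mono_on hxm hf₁ intervalIntegrable_const
            fun y hy => h_le y ⟨hy.1, hy.2.trans hmb⟩
      _ = (m - x) * t := by simp
      _ ≤ s * t := by gcongr; linarith [min_le_right b s]
      _ = √C * √t := hst
  have hsecond : ∫ y in m..b, f y ≤ √C * √t := by
    rcases le_total b s with hbs | hsb
    · simp only [m, min_eq_left hbs, intervalIntegral.integral_same]; positivity
    · calc ∫ y in m..b, f y ≤ C / m - C / b :=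
            integral_le_div_sub_div_of_sq_mul_le (hx.trans_le hxm) hmb hf₂
              fun y hy => h_sq y ⟨hxm.trans hy.1, hy.2⟩
        _ ≤ C / s := by
            rw [show m = s from min_eq_right hsb]
            exact sub_le_self _ (div_nonneg hC.le (hx.trans_le (hxs.trans hsb)).le)
        _ = √C * √t := hCs
  rw [← intervalIntegral.integral_add_adjacent_intervals hf₁ hf₂]
  linarith

theorem exists_mem_Ioc_measure_Ioi_ne_zero {μ : Measure ℝ} {a b : ℝ} (hab : a < b)
    (h : μ (Ioi a) ≠ 0) : ∃ c ∈ Ioc a b, μ (Ioi c) ≠ 0 := by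
  obtain ⟨u, -, hu_mem, hu_lim⟩ := exists_seq_strictAnti_tendsto' hab
  by_contra! hzero
  refine h (measure_mono_null (fun y hy => ?_)
    (measure_iUnion_null fun n => hzero (u n) (Ioo_subset_Ioc_self (hu_mem n))))
  obtain ⟨n, hn⟩ := (hu_lim.eventually (gt_mem_nhds hy)).exists
  exact mem_iUnion.2 ⟨n, hn⟩

theorem exists_mem_Ico_measure_Iio_ne_zero {μ : Measure ℝ} {a b : ℝ} (hab : a < b)
    (h : μ (Iio b) ≠ 0) : ∃ c ∈ Ico a b, μ (Iio c) ≠ 0 := by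
  obtain ⟨u, -, hu_mem, hu_lim⟩ := exists_seq_strictMono_tendsto' hab
  by_contra! hzero
  refine h (measure_mono_null (fun y hy => ?_)
    (measure_iUnion_null fun n => hzero (u n) (Ioo_subset_Ico_self (hu_mem n))))
  obtain ⟨n, hn⟩ := (hu_lim.eventually (lt_mem_nhds hy)).exists
  exact mem_iUnion.2 ⟨n, hn⟩

namespace LevyPaper

theorem limsupBddAt0_div_sqrt {F g : ℝ → ℝ} {x₁ K : ℝ} (hx₁ : 0 < x₁) (hg₁ : 0 < g x₁)
    (hg : ∀ x ∈ Ioo 0 x₁, g x₁ ≤ g x) (hF : ∀ x ∈ Ioo 0 x₁, F x ≤ F x₁ + K * √(g x)) :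
    LimsupBddAt0 fun x => F x / √(g x) := by
  refine ⟨|F x₁| / √(g x₁) + K, ?_⟩
  filter_upwards [Ioo_mem_nhdsGT hx₁] with x hx
  have hs₁ : 0 < √(g x₁) := Real.sqrt_pos.2 hg₁
  have hs : √(g x₁) ≤ √(g x) := Real.sqrt_le_sqrt (hg x hx)
  rw [div_le_iff₀ (hs₁.trans_le hs)]
  calc F x ≤ |F x₁| / √(g x₁) * √(g x₁) + K * √(g x) := by
        rw [div_mul_cancel₀ _ hs₁.ne']; linarith [hF x hx, le_abs_self (F x₁)]
    _ ≤ |F x₁| / √(g x₁) * √(g x) + K * √(g x) := by gcongr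
    _ = (|F x₁| / √(g x₁) + K) * √(g x) := by ring

def truncSecondMoment (P : Measure ℝ) : ℝ := (∫⁻ u, ENNReal.ofReal (min (u ^ 2) 1) ∂P).toReal

theorem ofReal_min_sq_one_mul_measure_le (P : Measure ℝ) {x : ℝ} {S : Set ℝ}
    (hS : ∀ u ∈ S, |x| ≤ |u|) :
    ENNReal.ofReal (min (x ^ 2) 1) * P S ≤ ∫⁻ u, ENNReal.ofReal (min (u ^ 2) 1) ∂P := by
  refine (mul_le_mul_right (measure_mono fun u hu => ?_) _).trans
    (mul_meas_ge_le_lintegral₀ (by fun_prop) _)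
  exact ENNReal.ofReal_le_ofReal (min_le_min_right _ (sq_le_sq.2 (hS u hu)))

variable {P : Measure ℝ}

theorem IsLevyMeasure.measure_lt_top {x : ℝ} {S : Set ℝ} (hP : IsLevyMeasure P) (hx : x ≠ 0)
    (hS : ∀ u ∈ S, |x| ≤ |u|) : P S < ⊤ :=
  ENNReal.lt_top_of_mul_ne_top_right
    ((ofReal_min_sq_one_mul_measure_le P hS).trans_lt hP.2).ne
    (ENNReal.ofReal_pos.2 (lt_min (by positivity) one_pos)).ne'

theorem IsLevyMeasure.measure_Ioi_lt_top (hP : IsLevyMeasure P) {x : ℝ} (hx : 0 < x) :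
    P (Ioi x) < ⊤ :=
  hP.measure_lt_top hx.ne' fun u hu => by
    rw [abs_of_pos hx, abs_of_pos (hx.trans hu)]; exact le_of_lt hu

theorem IsLevyMeasure.measure_Iio_neg_lt_top (hP : IsLevyMeasure P) {x : ℝ} (hx : 0 < x) :
    P (Iio (-x)) < ⊤ :=
  hP.measure_lt_top hx.ne' fun u hu => by
    rw [abs_of_pos hx, abs_of_neg ((mem_Iio.1 hu).trans (neg_neg_of_pos hx))]
    linarith [mem_Iio.1 hu]

theorem IsLevyMeasure.sq_mul_tailM_le (hP : IsLevyMeasure P) {x : ℝ} (hx₀ : 0 ≤ x)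
    (hx₁ : x ≤ 1) : x ^ 2 * tailM P x ≤ truncSecondMoment P := by
  have h := ENNReal.toReal_mono hP.2.ne (ofReal_min_sq_one_mul_measure_le P
    (S := Iio (-x)) fun u hu => by
      rw [abs_of_nonneg hx₀, abs_of_neg ((mem_Iio.1 hu).trans_le (neg_nonpos.2 hx₀))]
      linarith [mem_Iio.1 hu])
  rwa [ENNReal.toReal_mul, min_eq_left (pow_le_one₀ hx₀ hx₁),
    ENNReal.toReal_ofReal (sq_nonneg x)] at h

theorem IsLevyMeasure.tailP_antitoneOn (hP : IsLevyMeasure P) : AntitoneOn (tailP P) (Ioi 0) :=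
  fun _ ha _ _ hab => ENNReal.toReal_mono (hP.measure_Ioi_lt_top ha).ne
    (measure_mono (Ioi_subset_Ioi hab))

theorem IsLevyMeasure.tailM_antitoneOn (hP : IsLevyMeasure P) : AntitoneOn (tailM P) (Ioi 0) :=
  fun _ ha _ _ hab => ENNReal.toReal_mono (hP.measure_Iio_neg_lt_top ha).ne
    (measure_mono (Iio_subset_Iio (neg_le_neg hab)))

theorem IsLevyMeasure.intervalIntegrable_tailP (hP : IsLevyMeasure P) {a b : ℝ} (ha : 0 < a)
    (hb : 0 < b) : IntervalIntegrable (tailP P) volume a b :=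
  (hP.tailP_antitoneOn.mono fun _ hy => (lt_min ha hb).trans_le hy.1).intervalIntegrable

theorem IsLevyMeasure.intervalIntegrable_tailM (hP : IsLevyMeasure P) {a b : ℝ} (ha : 0 < a)
    (hb : 0 < b) : IntervalIntegrable (tailM P) volume a b :=
  (hP.tailM_antitoneOn.mono fun _ hy => (lt_min ha hb).trans_le hy.1).intervalIntegrable

theorem IsLevyMeasure.exists_tailP_pos (hP : IsLevyMeasure P) (h : P (Ioi 0) ≠ 0) :
    ∃ x ∈ Ioc (0 : ℝ) 1, 0 < tailP P x := by
  obtain ⟨x, hx, hx0⟩ := exists_mem_Ioc_measure_Ioi_ne_zero one_pos h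
  exact ⟨x, hx, ENNReal.toReal_pos hx0 (hP.measure_Ioi_lt_top hx.1).ne⟩

theorem IsLevyMeasure.exists_tailM_pos (hP : IsLevyMeasure P) (h : P (Iio 0) ≠ 0) :
    ∃ x ∈ Ioc (0 : ℝ) 1, 0 < tailM P x := by
  obtain ⟨c, hc, hc0⟩ := exists_mem_Ico_measure_Iio_ne_zero neg_one_lt_zero h
  refine ⟨-c, ⟨neg_pos.2 hc.2, neg_le.1 hc.1⟩, ENNReal.toReal_pos ?_ ?_⟩
  · rwa [neg_neg]
  · simpa using (hP.measure_Iio_neg_lt_top (neg_pos.2 hc.2)).ne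

theorem tailM_eq_zero (h : P (Iio 0) = 0) {x : ℝ} (hx : 0 ≤ x) : tailM P x = 0 := by
  simp [tailM, measure_mono_null (Iio_subset_Iio (neg_nonpos.2 hx)) h]

theorem IsLevyMeasure.Afun_le_add_integral_tailM (γ : ℝ) (hP : IsLevyMeasure P) {x x₁ : ℝ}
    (hx : 0 < x) (hxx₁ : x ≤ x₁) :
    Afun γ P x ≤ Afun γ P x₁ + ∫ y in x..x₁, tailM P y := by
  have hx₁ := hx.trans_le hxx₁
  have hsplit := intervalIntegral.integral_add_adjacent_intervals
    ((hP.intervalIntegrable_tailP hx hx₁).sub (hP.intervalIntegrable_tailM hx hx₁))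
    ((hP.intervalIntegrable_tailP hx₁ one_pos).sub (hP.intervalIntegrable_tailM hx₁ one_pos))
  rw [intervalIntegral.integral_sub (hP.intervalIntegrable_tailP hx hx₁)
    (hP.intervalIntegrable_tailM hx hx₁)] at hsplit
  have htailP : 0 ≤ ∫ y in x..x₁, tailP P y :=
    intervalIntegral.integral_nonneg hxx₁ fun _ _ => ENNReal.toReal_nonneg
  unfold Afun
  linarith

theorem IsLevyMeasure.integral_tailM_le (hP : IsLevyMeasure P) {x x₁ : ℝ} (hx : 0 < x)
    (hxx₁ : x ≤ x₁) (hx₁ : x₁ ≤ 1) (htail : 0 < tailM P x) :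
    ∫ y in x..x₁, tailM P y ≤ 2 * √(truncSecondMoment P) * √(tailM P x) :=
  integral_le_two_sqrt_mul_sqrt_of_sq_mul_le hx hxx₁
    (hP.intervalIntegrable_tailM hx (hx.trans_le hxx₁)) htail
    (fun _ hy => hP.tailM_antitoneOn hx (hx.trans_le hy.1) hy.1)
    fun _ hy => hP.sq_mul_tailM_le (hx.le.trans hy.1) (hy.2.trans hx₁)

end LevyPaper

/-- **Lemma 4.3.** If `Π̄⁻(0+) > 0`, then `limsup_{x↓0} A(x)/√Π̄⁻(x) < ∞`. If
`Π̄⁻(0+) = 0` and `Π̄⁺(0+) > 0`, then `limsup_{x↓0} A(x)/√Π̄⁺(x) < ∞`. -/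
theorem statement_12 (γ : ℝ) (P : Measure ℝ) (hP : IsLevyMeasure P) :
    (P (Set.Iio (0 : ℝ)) ≠ 0 →
      LimsupBddAt0 (fun x => Afun γ P x / Real.sqrt (tailM P x))) ∧
    (P (Set.Iio (0 : ℝ)) = 0 → P (Set.Ioi (0 : ℝ)) ≠ 0 →
      LimsupBddAt0 (fun x => Afun γ P x / Real.sqrt (tailP P x))) := by
  constructor
  · intro hM
    obtain ⟨x₁, hx₁, htail⟩ := hP.exists_tailM_pos hM
    refine limsupBddAt0_div_sqrt (K := 2 * √(truncSecondMoment P)) hx₁.1 htail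
      (fun x hx => hP.tailM_antitoneOn hx.1 hx₁.1 hx.2.le) fun x hx => ?_
    have hpos : 0 < tailM P x := htail.trans_le (hP.tailM_antitoneOn hx.1 hx₁.1 hx.2.le)
    exact (hP.Afun_le_add_integral_tailM γ hx.1 hx.2.le).trans
      (add_le_add_right (hP.integral_tailM_le hx.1 hx.2.le hx₁.2 hpos) _)
  · intro hM hPos
    obtain ⟨x₁, hx₁, htail⟩ := hP.exists_tailP_pos hPos
    refine limsupBddAt0_div_sqrt (K := 0) hx₁.1 htail
      (fun x hx => hP.tailP_antitoneOn hx.1 hx₁.1 hx.2.le) fun x hx => ?_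
    have hzero : ∫ y in x..x₁, tailM P y = 0 := by
      rw [intervalIntegral.integral_congr (g := fun _ => 0) fun y hy =>
        tailM_eq_zero hM (hx.1.le.trans (uIcc_of_le hx.2.le ▸ hy).1)]
      exact intervalIntegral.integral_zero
    simpa [hzero] using hP.Afun_le_add_integral_tailM γ hx.1 hx.2.le
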